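/- If G is a finite cubic (3-regular) simple graph and sigma is a minimal signature of G (i.e., |E^-(sigma)| = l(G,sigma)), then the set of negative edges E^-(sigma) is a matching: no two negative edges share a vertex. -/

import Mathlib

/-!
Switching at a vertex `v` negates the signs of the edges at `v` and leaves the sign of every
cycle, hence the frustration index, unchanged. Deleting the negative edges always balances a
signed graph, so a minimal signature cannot be improved by switching: at most half of the edges
at each vertex are negative, i.e. at most one at a vertex of degree 3.
-/

open SimpleGraph Finset

/-- A signed graph is balanced if every cycle has sign `+1`. -/
def IsBalanced {V : Type*} (G : SimpleGraph V) (σ : Sym2 V → ℤˣ) : Prop :=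
  ∀ (v : V) (w : G.Walk v v), w.IsCycle → (w.edges.map σ).prod = 1

/-- The set of negative edges of a signed graph. -/
def negEdges {V : Type*} (G : SimpleGraph V) (σ : Sym2 V → ℤˣ) : Set (Sym2 V) :=
  {e | e ∈ G.edgeSet ∧ σ e = -1}

/-- The frustration index: the least number of edges whose deletion leaves a balanced
signed graph. -/
noncomputable def frustIndex {V : Type*} (G : SimpleGraph V) (σ : Sym2 V → ℤˣ) : ℕ :=
  sInf {n | ∃ S : Finset (Sym2 V), ↑S ⊆ G.edgeSet ∧ S.card = n ∧
    IsBalanced (G.deleteEdges ↑S) σ}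

/-- The switched signature `σ^ζ`, with `σ^ζ(uv) = ζ(u) * σ(uv) * ζ(v)`. -/
def switch {V : Type*} (σ : Sym2 V → ℤˣ) (ζ : V → ℤˣ) : Sym2 V → ℤˣ := fun e =>
  Sym2.lift ⟨fun u v => ζ u * ζ v, fun u v => mul_comm (ζ u) (ζ v)⟩ e * σ e

open scoped symmDiff

theorem Set.ncard_symmDiff_add_two_mul_ncard_inter {α : Type*} (s t : Set α)
    (hs : s.Finite := by toFinite_tac) (ht : t.Finite := by toFinite_tac) :
    (s ∆ t).ncard + 2 * (s ∩ t).ncard = s.ncard + t.ncard := by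
  rw [Set.symmDiff_def, Set.ncard_union_eq disjoint_sdiff_sdiff hs.sdiff ht.sdiff,
    ← Set.ncard_inter_add_ncard_sdiff_eq_ncard s t hs,
    ← Set.ncard_inter_add_ncard_sdiff_eq_ncard t s ht, Set.inter_comm t s]
  ring

theorem SimpleGraph.ncard_incidenceSet_eq_degree {V : Type*} (G : SimpleGraph V) (v : V)
    [Fintype (G.neighborSet v)] : (G.incidenceSet v).ncard = G.degree v := by
  classical
  rw [← Nat.card_coe_set_eq, Nat.card_eq_fintype_card, card_incidenceSet_eq_degree]

section Switching

variable {V : Type*}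

theorem prod_map_switch_edges {H : SimpleGraph V} (σ : Sym2 V → ℤˣ) (ζ : V → ℤˣ) {a b : V}
    (w : H.Walk a b) :
    (w.edges.map (switch σ ζ)).prod = ζ a * ζ b * (w.edges.map σ).prod := by
  induction w with
  | nil => simp [Int.units_mul_self]
  | @cons u x y _ p ih =>
    rw [Walk.edges_cons, List.map_cons, List.prod_cons, ih, List.map_cons, List.prod_cons]
    calc switch σ ζ s(u, x) * (ζ x * ζ y * (p.edges.map σ).prod)
        = ζ u * ζ y * (ζ x * ζ x) * (σ s(u, x) * (p.edges.map σ).prod) := by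
          simp only [switch, Sym2.lift_mk]; ac_rfl
      _ = ζ u * ζ y * (σ s(u, x) * (p.edges.map σ).prod) := by
          rw [Int.units_mul_self, mul_one]

theorem isBalanced_switch_iff (H : SimpleGraph V) (σ : Sym2 V → ℤˣ) (ζ : V → ℤˣ) :
    IsBalanced H (switch σ ζ) ↔ IsBalanced H σ := by
  simp only [IsBalanced, prod_map_switch_edges, Int.units_mul_self, one_mul]

theorem frustIndex_switch (G : SimpleGraph V) (σ : Sym2 V → ℤˣ) (ζ : V → ℤˣ) :
    frustIndex G (switch σ ζ) = frustIndex G σ := by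
  simp only [frustIndex, isBalanced_switch_iff]

theorem negEdges_switch_mulSingle (G : SimpleGraph V) [DecidableEq V] (σ : Sym2 V → ℤˣ)
    (v : V) :
    negEdges G (switch σ (Pi.mulSingle v (-1))) = negEdges G σ ∆ G.incidenceSet v := by
  ext e
  induction e with
  | _ a b =>
    by_cases hab : G.Adj a b
    · rcases Int.units_eq_one_or (σ s(a, b)) with h | h <;>
      by_cases ha : v = a <;> by_cases hb : v = b <;>
      simp_all [negEdges, switch, Set.mem_symmDiff, SimpleGraph.incidenceSet]
    · simp [negEdges, Set.mem_symmDiff, SimpleGraph.incidenceSet, hab]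

theorem frustIndex_le_ncard_negEdges (G : SimpleGraph V) (σ : Sym2 V → ℤˣ)
    (hfin : (negEdges G σ).Finite) : frustIndex G σ ≤ (negEdges G σ).ncard := by
  refine Nat.sInf_le ⟨hfin.toFinset, by rw [hfin.coe_toFinset]; exact fun e he => he.1,
    (Set.ncard_eq_toFinset_card _ hfin).symm, fun v w _ => List.prod_eq_one ?_⟩
  simp only [List.mem_map, forall_exists_index, and_imp, forall_apply_eq_imp_iff₂]
  intro e he
  have he' := w.edges_subset_edgeSet he
  rw [edgeSet_deleteEdges, hfin.coe_toFinset] at he'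
  exact (Int.units_eq_one_or _).resolve_right fun h => he'.2 ⟨he'.1, h⟩

end Switching

theorem two_mul_ncard_negEdges_inter_incidenceSet_le {V : Type*} [Finite V]
    (G : SimpleGraph V) (σ : Sym2 V → ℤˣ) (hmin : (negEdges G σ).ncard = frustIndex G σ)
    (v : V) :
    2 * (negEdges G σ ∩ G.incidenceSet v).ncard ≤ (G.incidenceSet v).ncard := by
  classical
  have hcount := Set.ncard_symmDiff_add_two_mul_ncard_inter (negEdges G σ) (G.incidenceSet v)
  rw [← negEdges_switch_mulSingle] at hcount
  have hle := frustIndex_le_ncard_negEdges G (switch σ (Pi.mulSingle v (-1))) (Set.toFinite _)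
  rw [frustIndex_switch, ← hmin] at hle
  omega

/-- In a minimal signature of a finite cubic graph, the negative edges form a matching. -/
theorem cubic_minimal_negEdges_matching {V : Type*} [Fintype V] (G : SimpleGraph V)
    [DecidableRel G.Adj] (hcubic : ∀ v : V, G.degree v = 3) (σ : Sym2 V → ℤˣ)
    (hmin : (negEdges G σ).ncard = frustIndex G σ) :
    ∀ e ∈ negEdges G σ, ∀ f ∈ negEdges G σ, e ≠ f → ∀ v : V, v ∈ e → v ∉ f := by
  intro e he f hf hef v hve hvf
  have hhalf := two_mul_ncard_negEdges_inter_incidenceSet_le G σ hmin v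
  rw [G.ncard_incidenceSet_eq_degree, hcubic] at hhalf
  have htwo : 2 ≤ (negEdges G σ ∩ G.incidenceSet v).ncard := by
    rw [← Set.ncard_pair hef]
    exact Set.ncard_le_ncard (Set.pair_subset ⟨he, he.1, hve⟩ ⟨hf, hf.1, hvf⟩)
  omega
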